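/- arXiv:1911.04771 — 2 statements merged into one kernel-verified Lean document; each statement's English description precedes it below -/
import Mathlib

section
/- Let U(τ) = (λ₁τ⁴ + λ_p + 2λ₃τ²)/(4(ξ₁τ² + ξ₂)²) with ξ₁, ξ₂ > 0, and set a = λ₁ξ₂ − λ₃ξ₁, b = λ_pξ₁ − λ₃ξ₂. If a > 0 and b > 0, then τ₀ = √(b/a) is a critical point of U (U'(τ₀) = 0) and U(τ₀) = (λ₁λ_p − λ₃²)/(4(λ₁ξ₂² + λ_pξ₁² − 2λ₃ξ₁ξ₂)). -/
/-! Substituting `s = τ²` turns `U` into the ratio of the quadratic `λ₁s² + 2λ₃s + λ_p` and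
`4(ξ₁s + ξ₂)²`, whose derivative has numerator proportional to `a s - b`; hence `τ₀² = b/a` is
critical. At `s = b/a` the numerator becomes `(λ₁λ_p - λ₃²)(ξ₁b + ξ₂a) / a²` and the denominator
`4(ξ₁b + ξ₂a)² / a²`, where `ξ₁b + ξ₂a = λ₁ξ₂² + λ_pξ₁² - 2λ₃ξ₁ξ₂`. -/

section

variable (l1 lp l3 ξ1 ξ2 : ℝ)

theorem hasDerivAt_quartic_div_sq_quadratic (τ : ℝ) (hτ : ξ1 * τ ^ 2 + ξ2 ≠ 0) :
    HasDerivAt (fun τ : ℝ => (l1 * τ ^ 4 + lp + 2 * l3 * τ ^ 2) / (4 * (ξ1 * τ ^ 2 + ξ2) ^ 2))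
      (τ * ((l1 * ξ2 - l3 * ξ1) * τ ^ 2 - (lp * ξ1 - l3 * ξ2)) / (ξ1 * τ ^ 2 + ξ2) ^ 3) τ := by
  have hnum : HasDerivAt (fun τ : ℝ => l1 * τ ^ 4 + lp + 2 * l3 * τ ^ 2)
      (l1 * (4 * τ ^ 3) + 2 * l3 * (2 * τ)) τ := by
    have h4 := ((hasDerivAt_pow 4 τ).const_mul l1).add_const lp
    have h2 := (hasDerivAt_pow 2 τ).const_mul (2 * l3)
    exact (h4.add h2).congr_deriv (by norm_num)
  have hden : HasDerivAt (fun τ : ℝ => 4 * (ξ1 * τ ^ 2 + ξ2) ^ 2)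
      (4 * (2 * (ξ1 * τ ^ 2 + ξ2) * (ξ1 * (2 * τ)))) τ := by
    have hin := ((hasDerivAt_pow 2 τ).const_mul ξ1).add_const ξ2
    exact ((hin.pow 2).const_mul 4).congr_deriv (by ring)
  refine (hnum.div hden (mul_ne_zero four_ne_zero (pow_ne_zero 2 hτ))).congr_deriv ?_
  field_simp
  ring

theorem quadratic_form_at_critical_eq :
    l1 * (lp * ξ1 - l3 * ξ2) ^ 2 + 2 * l3 * (l1 * ξ2 - l3 * ξ1) * (lp * ξ1 - l3 * ξ2)
        + lp * (l1 * ξ2 - l3 * ξ1) ^ 2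
      = (l1 * lp - l3 ^ 2) * (l1 * ξ2 ^ 2 + lp * ξ1 ^ 2 - 2 * l3 * ξ1 * ξ2) := by
  ring

theorem quartic_div_sq_quadratic_of_sq_eq (a b τ : ℝ) (ha : a = l1 * ξ2 - l3 * ξ1)
    (hb : b = lp * ξ1 - l3 * ξ2) (ha0 : a ≠ 0) (hτ : τ ^ 2 = b / a) :
    (l1 * τ ^ 4 + lp + 2 * l3 * τ ^ 2) / (4 * (ξ1 * τ ^ 2 + ξ2) ^ 2)
      = (l1 * lp - l3 ^ 2) / (4 * (l1 * ξ2 ^ 2 + lp * ξ1 ^ 2 - 2 * l3 * ξ1 * ξ2)) := by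
  have hsum : ξ1 * τ ^ 2 + ξ2 = (l1 * ξ2 ^ 2 + lp * ξ1 ^ 2 - 2 * l3 * ξ1 * ξ2) / a := by
    rw [hτ, eq_div_iff ha0]
    field_simp
    rw [ha, hb]
    ring
  have hnum : l1 * τ ^ 4 + lp + 2 * l3 * τ ^ 2
      = (l1 * lp - l3 ^ 2) * (l1 * ξ2 ^ 2 + lp * ξ1 ^ 2 - 2 * l3 * ξ1 * ξ2) / a ^ 2 := by
    rw [← quadratic_form_at_critical_eq, ← ha, ← hb, show τ ^ 4 = (τ ^ 2) ^ 2 by ring, hτ]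
    field_simp
    ring
  rw [hnum, hsum]
  rcases eq_or_ne (l1 * ξ2 ^ 2 + lp * ξ1 ^ 2 - 2 * l3 * ξ1 * ξ2) 0 with hD | hD
  · simp [hD]
  · field_simp

end

theorem two_field_minimum_general (l1 lp l3 ξ1 ξ2 : ℝ)
    (hx1 : 0 < ξ1) (hx2 : 0 < ξ2)
    (a b : ℝ) (ha : a = l1 * ξ2 - l3 * ξ1) (hb : b = lp * ξ1 - l3 * ξ2)
    (hapos : 0 < a) (hbpos : 0 < b)
    (U : ℝ → ℝ)
    (hU : ∀ τ : ℝ, U τ = (l1 * τ^4 + lp + 2 * l3 * τ^2) / (4 * (ξ1 * τ^2 + ξ2)^2)) :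
    deriv U (Real.sqrt (b / a)) = 0
    ∧ U (Real.sqrt (b / a))
        = (l1 * lp - l3^2) / (4 * (l1 * ξ2^2 + lp * ξ1^2 - 2 * l3 * ξ1 * ξ2)) := by
  set τ₀ := Real.sqrt (b / a)
  have hτ₀ : τ₀ ^ 2 = b / a := Real.sq_sqrt (div_pos hbpos hapos).le
  constructor
  · subst ha hb
    rw [funext hU, (hasDerivAt_quartic_div_sq_quadratic l1 lp l3 ξ1 ξ2 τ₀
      (by positivity)).deriv, hτ₀, mul_div_cancel₀ _ hapos.ne', sub_self, mul_zero, zero_div]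
  · rw [hU]
    exact quartic_div_sq_quadratic_of_sq_eq l1 lp l3 ξ1 ξ2 a b τ₀ ha hb hapos.ne' hτ₀

/-- For `U(τ) = (λ₁τ⁴ + λ_p + 2λ₃τ²)/(4(ξ₁τ²+ξ₂)²)` with `a = λ₁ξ₂-λ₃ξ₁ > 0` and
`b = λ_pξ₁-λ₃ξ₂ > 0`, the point `τ₀ = √(b/a)` is a critical point of `U` and
`U(τ₀) = (λ₁λ_p - λ₃²)/(4(λ₁ξ₂² + λ_pξ₁² - 2λ₃ξ₁ξ₂))`. -/
theorem two_field_minimum (l1 lp l3 ξ1 ξ2 : ℝ)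
    (h1 : 0 < l1) (hp : 0 < lp) (hd : 0 < l1 * lp - l3^2)
    (hx1 : 0 < ξ1) (hx2 : 0 < ξ2)
    (a b : ℝ) (ha : a = l1 * ξ2 - l3 * ξ1) (hb : b = lp * ξ1 - l3 * ξ2)
    (hapos : 0 < a) (hbpos : 0 < b)
    (U : ℝ → ℝ)
    (hU : ∀ τ : ℝ, U τ = (l1 * τ^4 + lp + 2 * l3 * τ^2) / (4 * (ξ1 * τ^2 + ξ2)^2)) :
    deriv U (Real.sqrt (b / a)) = 0
    ∧ U (Real.sqrt (b / a))
        = (l1 * lp - l3^2) / (4 * (l1 * ξ2^2 + lp * ξ1^2 - 2 * l3 * ξ1 * ξ2)) :=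
  two_field_minimum_general l1 lp l3 ξ1 ξ2 hx1 hx2 a b ha hb hapos hbpos U hU
end

section
/- Let f(φ,χ) = ½[M^{D−2} + ξ_φφ² + ξ_χχ²] with ξ_φ, ξ_χ ≠ 0 and D > 2, and let G̃_{ij} = δ_{ij} + (2(D−1)/(D−2))·f_{,i}f_{,j}/f be the (rescaled) field-space metric on the two-dimensional field space. Then the scalar curvature R̃ of G̃ satisfies L(φ,χ)·R̃ = 2(D−1)(D−2)ξ_φξ_χM^{D−2}, where L = [(D−2)f + 2(D−1)(f_{,φ}² + f_{,χ}²)]². In particular R̃ vanishes identically if and only if M = 0, so for M ≠ 0 the field-space metric is not flat and no field redefinition brings both the Einstein–Hilbert term and kinetic terms to canonical form. -/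
/-!
For the quadratic potential `f = ½(c + ξ_φ φ² + ξ_χ χ²)` the mixed second derivative vanishes and
the pure ones are the constants `ξ_φ, ξ_χ`, so the bracket in the curvature formula collapses to
`ξ_φ ξ_χ (2f - ξ_φ φ² - ξ_χ χ²) = ξ_φ ξ_χ c` with `c = M^{D-2}`. Multiplying by `L` is harmless
even where `L` vanishes: `L = B²` with `B ≥ (D-2) f ≥ (D-2) c / 2 ≥ 0`, so `L = 0` forces `c = 0`.
-/

section HalfQuadratic

variable {c a b : ℝ} {f : ℝ → ℝ → ℝ}

lemma deriv_fst_of_half_quadratic (hf : ∀ φ χ, f φ χ = (c + a * φ ^ 2 + b * χ ^ 2) / 2) (χ : ℝ) :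
    deriv (fun u => f u χ) = fun u => a * u := by
  funext u
  simp only [hf, deriv_div_const, deriv_add_const, deriv_const_add', deriv_const_mul_field',
    deriv_pow_field]
  ring

lemma deriv_snd_of_half_quadratic (hf : ∀ φ χ, f φ χ = (c + a * φ ^ 2 + b * χ ^ 2) / 2) (φ : ℝ) :
    deriv (fun v => f φ v) = fun v => b * v := by
  funext v
  simp only [hf, deriv_div_const, deriv_const_add', deriv_const_mul_field', deriv_pow_field]
  ring

end HalfQuadratic

lemma mul_div_mul_eq_of_imp_eq_zero {α : Type*} [Field α] {L N : α} (K : α)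
    (h : L = 0 → N = 0) : L * (K / L * N) = K * N := by
  rcases eq_or_ne L 0 with hL | hL
  · simp [hL, h hL]
  · field_simp

/-- For `f(φ,χ) = ½[M^{D-2} + ξ_φφ² + ξ_χχ²]` with `D > 2`, the scalar curvature
`R̃` of the rescaled field-space metric, given by the general two-field formula
`R̃ = (2(D-1)(D-2)/L)[2f f_{,φφ}f_{,χχ} - f_{,φ}²f_{,χχ} - f_{,χ}²f_{,φφ}
 - 2f_{,φχ}(f f_{,φχ} - f_{,φ}f_{,χ})]` with
`L = [(D-2)f + 2(D-1)(f_{,φ}² + f_{,χ}²)]²`, satisfies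
`L·R̃ = 2(D-1)(D-2)ξ_φξ_χM^{D-2}`; in particular `R̃` vanishes identically iff
`M = 0`, so for `M ≠ 0` the field-space metric is not flat. -/
theorem field_space_curvature (D : ℕ) (hD : 2 < D) (ξφ ξχ M : ℝ)
    (hξφ : 0 < ξφ) (hξχ : 0 < ξχ) (hM : 0 ≤ M)
    (f : ℝ → ℝ → ℝ)
    (hf : ∀ φ χ : ℝ, f φ χ = (M ^ (D - 2) + ξφ * φ^2 + ξχ * χ^2) / 2)
    (L Rt : ℝ → ℝ → ℝ)
    (hL : ∀ φ χ : ℝ, L φ χ =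
      (((D : ℝ) - 2) * f φ χ
        + 2 * ((D : ℝ) - 1) * ((deriv (fun u => f u χ) φ)^2 + (deriv (fun v => f φ v) χ)^2))^2)
    (hR : ∀ φ χ : ℝ, Rt φ χ =
      (2 * ((D : ℝ) - 1) * ((D : ℝ) - 2) / L φ χ) *
        (2 * f φ χ * deriv (deriv (fun u => f u χ)) φ * deriv (deriv (fun v => f φ v)) χ
          - (deriv (fun u => f u χ) φ)^2 * deriv (deriv (fun v => f φ v)) χ
          - (deriv (fun v => f φ v) χ)^2 * deriv (deriv (fun u => f u χ)) φ
          - 2 * (deriv (fun v => deriv (fun u => f u v) φ) χ) *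
              (f φ χ * deriv (fun v => deriv (fun u => f u v) φ) χ
                - deriv (fun u => f u χ) φ * deriv (fun v => f φ v) χ))) :
    (∀ φ χ : ℝ, L φ χ * Rt φ χ = 2 * ((D : ℝ) - 1) * ((D : ℝ) - 2) * ξφ * ξχ * M ^ (D - 2))
    ∧ ((∀ φ χ : ℝ, Rt φ χ = 0) ↔ M = 0) := by
  have hD' : (2 : ℝ) < D := by exact_mod_cast hD
  have hf_φ : ∀ φ χ, deriv (fun u => f u χ) φ = ξφ * φ := by simp [deriv_fst_of_half_quadratic hf]
  have hf_χ : ∀ φ χ, deriv (fun v => f φ v) χ = ξχ * χ := by simp [deriv_snd_of_half_quadratic hf]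
  have hf_φφ : ∀ φ χ, deriv (deriv (fun u => f u χ)) φ = ξφ := by
    simp [deriv_fst_of_half_quadratic hf]
  have hf_χχ : ∀ φ χ, deriv (deriv (fun v => f φ v)) χ = ξχ := by
    simp [deriv_snd_of_half_quadratic hf]
  have hf_φχ : ∀ φ χ, deriv (fun v => deriv (fun u => f u v) φ) χ = 0 := by simp [hf_φ]
  have hRt : ∀ φ χ,
      Rt φ χ = 2 * ((D : ℝ) - 1) * ((D : ℝ) - 2) / L φ χ * (ξφ * ξχ * M ^ (D - 2)) := by
    intro φ χ
    rw [hR, hf_φχ, hf_φφ, hf_χχ, hf_φ, hf_χ, hf]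
    ring
  have hL_eq_zero : ∀ φ χ, L φ χ = 0 → ξφ * ξχ * M ^ (D - 2) = 0 := by
    intro φ χ h
    rw [hL, hf_φ, hf_χ, hf, pow_eq_zero_iff two_ne_zero] at h
    have hc : M ^ (D - 2) = 0 := le_antisymm
      (by nlinarith [mul_nonneg hξφ.le (sq_nonneg φ), mul_nonneg hξχ.le (sq_nonneg χ),
        sq_nonneg (ξφ * φ), sq_nonneg (ξχ * χ)]) (pow_nonneg hM _)
    rw [hc, mul_zero]
  have hLRt : ∀ φ χ, L φ χ * Rt φ χ =
      2 * ((D : ℝ) - 1) * ((D : ℝ) - 2) * ξφ * ξχ * M ^ (D - 2) := fun φ χ => by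
    rw [hRt, mul_div_mul_eq_of_imp_eq_zero _ (hL_eq_zero φ χ)]
    ring
  refine ⟨hLRt, fun hflat => ?_, fun hM0 φ χ => ?_⟩
  · have hK : 2 * ((D : ℝ) - 1) * ((D : ℝ) - 2) * ξφ * ξχ ≠ 0 :=
      (mul_pos (mul_pos (mul_pos (mul_pos two_pos (by linarith)) (by linarith)) hξφ) hξχ).ne'
    have h00 := hLRt 0 0
    rw [hflat, mul_zero, eq_comm, mul_eq_zero] at h00
    exact pow_eq_zero_iff (by omega) |>.mp (h00.resolve_left hK)
  · rw [hRt, hM0, zero_pow (by omega)]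
    ring
end
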